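/- Finite convergence (Lemma 2, restated): suppose x̃ ∈ X is optimal for the restricted master problem with cut set including the cut generated by λ = x̃ (i.e., the restricted optimum z̃ satisfies z̃ ≥ ∑_i α_i x̃_i − β with α_i = ∑_{j≠i} x̃_j b j i + x̃_i u_i, β = ∑_i x̃_i u_i), and z̃ + ∑_i c_i x̃_i is a lower bound for min_{x∈X} q(x) where q(x) = ∑_i x_i ∑_{j≠i} b i j x_j + ∑_i c_i x_i. Then x̃ is an optimal solution of (P), i.e., q(x̃) = min_{x∈X} q(x). -/

import Mathlib

open Finset

theorem Finset.sum_sum_erase_comm {ι M : Type*} [Fintype ι] [DecidableEq ι] [AddCommGroup M]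
    (f : ι → ι → M) :
    ∑ i, ∑ j ∈ univ.erase i, f j i = ∑ i, ∑ j ∈ univ.erase i, f i j := by
  simp only [sum_erase_eq_sub (mem_univ _), sum_sub_distrib]
  rw [sum_comm]

/-- On a 0/1 point `x`, the cut generated by `x` evaluates to the quadratic part of the
objective at `x`: the `u`-terms cancel because `x i * x i = x i`. -/
theorem cut_sub_eq_quadratic_of_idempotent {ι R : Type*} [Fintype ι] [DecidableEq ι]
    [CommRing R] (b : ι → ι → R) (u x : ι → R) (hx : ∀ i, x i * x i = x i) :
    ∑ i, (∑ j ∈ univ.erase i, x j * b j i + x i * u i) * x i - ∑ i, x i * u i =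
      ∑ i, x i * ∑ j ∈ univ.erase i, b i j * x j := by
  have hterm : ∀ i, (∑ j ∈ univ.erase i, x j * b j i + x i * u i) * x i =
      ∑ j ∈ univ.erase i, x j * b j i * x i + x i * u i := by
    intro i
    rw [add_mul, mul_right_comm (x i), hx, sum_mul]
  simp only [hterm, sum_add_distrib, add_sub_cancel_right, mul_sum]
  rw [← sum_sum_erase_comm]
  exact sum_congr rfl fun i _ => sum_congr rfl fun j _ => by ring

theorem stmt_13_general (n : ℕ) (X : Set (Fin n → ℝ))
    (hX01 : ∀ x ∈ X, ∀ j, x j = 0 ∨ x j = 1)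
    (b : Fin n → Fin n → ℝ) (c u : Fin n → ℝ)
    (xt : Fin n → ℝ) (hxt : xt ∈ X) (zt : ℝ)
    (hlb : ∀ x ∈ X, zt + ∑ i, c i * xt i ≤
        ∑ i, x i * (∑ j ∈ Finset.univ.erase i, b i j * x j) + ∑ i, c i * x i)
    (hcut : ∑ i, (∑ j ∈ Finset.univ.erase i, xt j * b j i + xt i * u i) * xt i -
        ∑ i, xt i * u i ≤ zt) :
    ∀ x ∈ X,
      ∑ i, xt i * (∑ j ∈ Finset.univ.erase i, b i j * xt j) + ∑ i, c i * xt i ≤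
      ∑ i, x i * (∑ j ∈ Finset.univ.erase i, b i j * x j) + ∑ i, c i * x i := by
  intro x hx
  have hxt_idem : ∀ i, xt i * xt i = xt i := fun i => by
    rcases hX01 xt hxt i with h | h <;> simp [h]
  rw [cut_sub_eq_quadratic_of_idempotent b u xt hxt_idem] at hcut
  linarith [hlb x hx]

theorem stmt_13 (n : ℕ) (X : Set (Fin n → ℝ)) (hXne : X.Nonempty) (hXfin : X.Finite)
    (hX01 : ∀ x ∈ X, ∀ j, x j = 0 ∨ x j = 1)
    (b : Fin n → Fin n → ℝ) (hb : ∀ i j, 0 ≤ b i j) (c u : Fin n → ℝ)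
    (xt : Fin n → ℝ) (hxt : xt ∈ X) (zt : ℝ)
    (hlb : ∀ x ∈ X, zt + ∑ i, c i * xt i ≤
        ∑ i, x i * (∑ j ∈ Finset.univ.erase i, b i j * x j) + ∑ i, c i * x i)
    (hcut : ∑ i, (∑ j ∈ Finset.univ.erase i, xt j * b j i + xt i * u i) * xt i -
        ∑ i, xt i * u i ≤ zt) :
    ∀ x ∈ X,
      ∑ i, xt i * (∑ j ∈ Finset.univ.erase i, b i j * xt j) + ∑ i, c i * xt i ≤
      ∑ i, x i * (∑ j ∈ Finset.univ.erase i, b i j * x j) + ∑ i, c i * x i :=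
  stmt_13_general n X hX01 b c u xt hxt zt hlb hcut
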